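/- Define coefficients γ(L) recursively by γ(0)=1 and γ(L) = 1{L even}·(Δ/2)^{L/2}/(L/2)! − Σ_{l=0}^{L−1} γ(l)·x^{L−l}/(L−l)! where x is a real variable. Then for a centered Gaussian random variable Z with variance Δ, and for every polynomial p of degree at most N, E[p(Z)] = Σ_{l=0}^{N} γ(l)(x) · p^{(l)}(x) for all x ∈ ℝ, where γ(l)(x) denotes γ(l) evaluated with x, and p^{(l)} is the l-th derivative of p. -/

import Mathlib

/-!
The recursion says exactly that `∑_{l ≤ n} γ l x · x^{n-l} / (n-l)! = c n` for every `n`, where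
`c n` is the coefficient of `t^n` in `exp (Δ t² / 2)`; in other words `γ(t) · e^{x t} = e^{Δ t² / 2}`
as power series in `t`. Since `exp (Δ t² / 2)` is the moment generating function of `N(0, Δ)`, the
`n`-th moment of `Z` is `n! · c n`; this follows from the ODE `M' = Δ t M`, which gives
`M^{(n+2)}(0) = (n+1) Δ M^{(n)}(0)`. Both sides of the identity are linear in `p`, and for
`p = X^n` the right-hand side is `∑_l γ l x · n!/(n-l)! · x^{n-l} = n! · c n`.
-/

open MeasureTheory ProbabilityTheory Polynomial
open scoped NNReal

open scoped ContDiff in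
lemma hasDerivAt_iteratedDeriv_of_contDiff {𝕜 F : Type*} [NontriviallyNormedField 𝕜]
    [NormedAddCommGroup F] [NormedSpace 𝕜 F] {f : 𝕜 → F} (hf : ContDiff 𝕜 ∞ f) (n : ℕ) (t : 𝕜) :
    HasDerivAt (iteratedDeriv n f) (iteratedDeriv (n + 1) f t) t := by
  rw [iteratedDeriv_succ]
  exact (hf.differentiable_iteratedDeriv n (mod_cast WithTop.coe_lt_top _) t).hasDerivAt

open scoped ContDiff in
lemma iteratedDeriv_add_two_of_deriv_eq_mul {𝕜 : Type*} [NontriviallyNormedField 𝕜]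
    {f : 𝕜 → 𝕜} {c : 𝕜} (hf : ContDiff 𝕜 ∞ f) (hf' : ∀ t, deriv f t = c * t * f t)
    (n : ℕ) (t : 𝕜) :
    iteratedDeriv (n + 2) f t
      = c * t * iteratedDeriv (n + 1) f t + (n + 1) * c * iteratedDeriv n f t := by
  have hd := hasDerivAt_iteratedDeriv_of_contDiff hf
  induction n generalizing t with
  | zero =>
    have h : HasDerivAt (fun t ↦ c * t * f t) (c * f t + c * t * deriv f t) t := by
      refine (((hasDerivAt_id t).const_mul c).fun_mul (hd 0 t)).congr_deriv ?_
      simp [iteratedDeriv_one]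
    rw [iteratedDeriv_succ, iteratedDeriv_one, funext hf', h.deriv, hf']
    simp only [iteratedDeriv_zero, Nat.cast_zero, zero_add]
    ring
  | succ n ih =>
    have h : HasDerivAt (iteratedDeriv (n + 2) f)
        (c * iteratedDeriv (n + 1) f t + c * t * iteratedDeriv (n + 2) f t
          + (n + 1) * c * iteratedDeriv (n + 1) f t) t := by
      refine ((((hasDerivAt_id t).const_mul c).fun_mul (hd (n + 1) t)).fun_add
        ((hd n t).const_mul ((n + 1) * c))).congr_of_eventuallyEq (.of_forall ih)
        |>.congr_deriv ?_
      simp only [id]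
      ring
    rw [iteratedDeriv_succ, h.deriv]
    push_cast
    ring

lemma deriv_exp_mul_sq_div_two (c t : ℝ) :
    deriv (fun t ↦ Real.exp (c * t ^ 2 / 2)) t = c * t * Real.exp (c * t ^ 2 / 2) := by
  have h : HasDerivAt (fun t ↦ Real.exp (c * t ^ 2 / 2))
      (Real.exp (c * t ^ 2 / 2) * (c * t)) t := by
    refine (((hasDerivAt_pow 2 t).const_mul c).div_const 2).exp.congr_deriv ?_
    simp only [Nat.cast_ofNat, Nat.add_one_sub_one, pow_one]
    ring
  rw [h.deriv, mul_comm]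

/-- The coefficient of `t ^ n` in `exp (v t² / 2)`. -/
noncomputable def gaussianMomentCoeff (v : ℝ) (n : ℕ) : ℝ :=
  if Even n then (v / 2) ^ (n / 2) / (n / 2).factorial else 0

lemma gaussianMomentCoeff_add_two (v : ℝ) (n : ℕ) :
    (n + 2) * gaussianMomentCoeff v (n + 2) = v * gaussianMomentCoeff v n := by
  rcases Nat.even_or_odd n with ⟨k, rfl⟩ | hodd
  · have h : (k + k + 2) / 2 = k + 1 := by omega
    have h' : (k + k) / 2 = k := by omega
    rw [gaussianMomentCoeff, gaussianMomentCoeff, if_pos ⟨k + 1, by ring⟩, if_pos ⟨k, rfl⟩, h, h',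
      Nat.factorial_succ]
    push_cast
    field_simp
    ring
  · simp [gaussianMomentCoeff, Nat.even_add, Nat.not_even_iff_odd.mpr hodd]

lemma integral_pow_gaussianReal (v : ℝ≥0) (n : ℕ) :
    ∫ x, x ^ n ∂gaussianReal 0 v = n.factorial * gaussianMomentCoeff v n := by
  set m : ℕ → ℝ := fun n ↦ iteratedDeriv n (fun t ↦ Real.exp (v * t ^ 2 / 2)) 0
  have hmoment (n : ℕ) : ∫ x, x ^ n ∂gaussianReal 0 v = m n := by
    have := iteratedDeriv_mgf_zero (X := id) (μ := gaussianReal 0 v) (by simp) n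
    simpa [mgf_id_gaussianReal] using this.symm
  have hrec (n : ℕ) : m (n + 2) = (n + 1) * v * m n := by
    simpa [m] using iteratedDeriv_add_two_of_deriv_eq_mul (by fun_prop)
      (deriv_exp_mul_sq_div_two (v : ℝ)) n 0
  rw [hmoment]
  induction n using Nat.twoStepInduction with
  | zero => simp [m, gaussianMomentCoeff]
  | one => simp [m, gaussianMomentCoeff, deriv_exp_mul_sq_div_two]
  | more n ih _ =>
    rw [hrec, ih, Nat.factorial_succ, Nat.factorial_succ]
    push_cast
    linear_combination -((n : ℝ) + 1) * n.factorial * gaussianMomentCoeff_add_two v n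

lemma integral_eval_eq_sum_coeff_mul_integral_pow {μ : Measure ℝ}
    (hμ : ∀ n : ℕ, Integrable (fun x ↦ x ^ n) μ) {p : ℝ[X]} {N : ℕ} (hp : p.natDegree < N) :
    ∫ x, p.eval x ∂μ = ∑ n ∈ Finset.range N, p.coeff n * ∫ x, x ^ n ∂μ := by
  simp_rw [eval_eq_sum_range' hp]
  rw [integral_finsetSum _ fun n _ ↦ (hμ n).const_mul _]
  simp_rw [integral_const_mul]

lemma eval_iterate_derivative_eq_sum {R : Type*} [CommSemiring R] {p : R[X]} {N : ℕ}
    (hp : p.natDegree < N) (l : ℕ) (x : R) :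
    (derivative^[l] p).eval x
      = ∑ n ∈ Finset.range N, p.coeff n * (n.descFactorial l * x ^ (n - l)) := by
  conv_lhs => rw [as_sum_range' p N hp]
  simp_rw [iterate_derivative_sum, eval_finsetSum, ← C_mul_X_pow_eq_monomial,
    iterate_derivative_C_mul, iterate_derivative_X_pow_eq_natCast_mul, eval_mul, eval_C,
    eval_natCast, eval_pow, eval_X]

lemma sum_mul_eval_iterate_derivative {R : Type*} [CommSemiring R] (g : ℕ → R) {p : R[X]}
    {N : ℕ} (hp : p.natDegree < N) (x : R) :
    ∑ l ∈ Finset.range N, g l * (derivative^[l] p).eval x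
      = ∑ n ∈ Finset.range N, p.coeff n
          * ∑ l ∈ Finset.range (n + 1), g l * (n.descFactorial l * x ^ (n - l)) := by
  simp_rw [eval_iterate_derivative_eq_sum hp, Finset.mul_sum]
  rw [Finset.sum_comm]
  refine Finset.sum_congr rfl fun n hn ↦ ?_
  refine (Finset.sum_subset (Finset.range_subset_range.mpr (Finset.mem_range.mp hn))
    fun l _ hl ↦ ?_).symm.trans (Finset.sum_congr rfl fun l _ ↦ by ring)
  rw [Nat.descFactorial_eq_zero_iff_lt.mpr (by simpa using hl)]
  simp

lemma sum_mul_descFactorial_mul_pow (g : ℕ → ℝ) (n : ℕ) (x : ℝ) :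
    ∑ l ∈ Finset.range (n + 1), g l * (n.descFactorial l * x ^ (n - l))
      = n.factorial * ∑ l ∈ Finset.range (n + 1), g l * x ^ (n - l) / (n - l).factorial := by
  rw [Finset.mul_sum]
  refine Finset.sum_congr rfl fun l hl ↦ ?_
  rw [← Nat.factorial_mul_descFactorial (Nat.lt_succ_iff.mp (Finset.mem_range.mp hl))]
  push_cast
  field_simp

lemma sum_mul_pow_div_factorial_of_recursion {c g : ℕ → ℝ} {x : ℝ} (h0 : g 0 = c 0)
    (hg : ∀ L, 0 < L → g L = c L - ∑ l ∈ Finset.range L, g l * x ^ (L - l) / (L - l).factorial)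
    (n : ℕ) : ∑ l ∈ Finset.range (n + 1), g l * x ^ (n - l) / (n - l).factorial = c n := by
  rcases Nat.eq_zero_or_pos n with rfl | hn
  · simp [h0]
  · rw [Finset.sum_range_succ, hg n hn]
    simp

theorem stmt3_general {Ω : Type*} {mΩ : MeasurableSpace Ω} (μ : Measure Ω)
    (Δ : ℝ) (hΔ : 0 ≤ Δ) (γ : ℕ → ℝ → ℝ)
    (hγ0 : ∀ x : ℝ, γ 0 x = 1)
    (hγ : ∀ (L : ℕ) (x : ℝ), 0 < L →
      γ L x = (if Even L then (Δ / 2) ^ (L / 2) / (Nat.factorial (L / 2) : ℝ) else 0)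
        - ∑ l ∈ Finset.range L, γ l x * x ^ (L - l) / (Nat.factorial (L - l) : ℝ))
    (Z : Ω → ℝ) (hZ : μ.map Z = gaussianReal 0 (Real.toNNReal Δ))
    (p : Polynomial ℝ) (N : ℕ) (hp : p.natDegree ≤ N) :
    ∀ x : ℝ,
      ∫ ω, p.eval (Z ω) ∂μ
        = ∑ l ∈ Finset.range (N + 1), γ l x * (Polynomial.derivative^[l] p).eval x := by
  intro x
  have hp' : p.natDegree < N + 1 := Nat.lt_succ_of_le hp
  have hZm : AEMeasurable Z μ := aemeasurable_of_map_neZero (by rw [hZ]; infer_instance)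
  have hmoments (n : ℕ) : Integrable (fun x : ℝ ↦ x ^ n) (gaussianReal 0 Δ.toNNReal) :=
    integrable_pow_of_mem_interior_integrableExpSet (X := id) (by simp) n
  have hrec (n : ℕ) : ∑ l ∈ Finset.range (n + 1), γ l x * x ^ (n - l) / (n - l).factorial
      = gaussianMomentCoeff Δ n :=
    sum_mul_pow_div_factorial_of_recursion (by simp [hγ0]) (hγ · x) n
  rw [← integral_map hZm p.continuous.aestronglyMeasurable, hZ,
    integral_eval_eq_sum_coeff_mul_integral_pow hmoments hp', sum_mul_eval_iterate_derivative _ hp']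
  refine Finset.sum_congr rfl fun n _ ↦ ?_
  rw [integral_pow_gaussianReal, Real.coe_toNNReal _ hΔ, sum_mul_descFactorial_mul_pow, hrec]

/-- Let `γ` satisfy the recursion `γ 0 = 1` and
`γ L x = 1{L even}·(Δ/2)^{L/2}/(L/2)! − Σ_{l<L} γ l x · x^{L−l}/(L−l)!`.
Then for a centered Gaussian `Z` with variance `Δ` and any polynomial `p` of degree at most
`N`, `E[p(Z)] = Σ_{l=0}^{N} γ l x · p^{(l)}(x)` for every `x`. -/
theorem stmt3 {Ω : Type*} {mΩ : MeasurableSpace Ω} (μ : Measure Ω) [IsProbabilityMeasure μ]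
    (Δ : ℝ) (hΔ : 0 ≤ Δ) (γ : ℕ → ℝ → ℝ)
    (hγ0 : ∀ x : ℝ, γ 0 x = 1)
    (hγ : ∀ (L : ℕ) (x : ℝ), 0 < L →
      γ L x = (if Even L then (Δ / 2) ^ (L / 2) / (Nat.factorial (L / 2) : ℝ) else 0)
        - ∑ l ∈ Finset.range L, γ l x * x ^ (L - l) / (Nat.factorial (L - l) : ℝ))
    (Z : Ω → ℝ) (hZ : μ.map Z = gaussianReal 0 (Real.toNNReal Δ))
    (p : Polynomial ℝ) (N : ℕ) (hp : p.natDegree ≤ N) :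
    ∀ x : ℝ,
      ∫ ω, p.eval (Z ω) ∂μ
        = ∑ l ∈ Finset.range (N + 1), γ l x * (Polynomial.derivative^[l] p).eval x :=
  stmt3_general (mΩ := mΩ) μ Δ hΔ γ hγ0 hγ Z hZ p N hp
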